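/- Let C ⊆ (2R)ⁿ be an R-submodule of Rⁿ such that (δ,δ,…,δ) ∈ C and ρ(C) ⊆ C. Then the DNA code D = {ψ₂(x) : x ∈ C} ⊆ Σ^{3n} is closed under the reverse map s ↦ sʳ and under the reverse-complement map s ↦ sʳᶜ, every codeword of D has GC-content exactly 2n, and no codeword of D contains a homopolymer run of length greater than 2. -/

import Mathlib

open Polynomial

noncomputable section

/-- The ring `R = ℤ₄[u]/(u³ − 1)`. -/
abbrev R : Type := Polynomial (ZMod 4) ⧸ Ideal.span ({Polynomial.X ^ 3 - 1} : Set (Polynomial (ZMod 4)))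

/-- The image `u` of the variable in `R`. -/
def u : R := Ideal.Quotient.mk _ Polynomial.X

instance : DecidableEq R := Classical.decEq R

lemma u_pow_three : u ^ 3 = 1 := by
  have h : (Ideal.Quotient.mk (Ideal.span ({Polynomial.X ^ 3 - 1} : Set (Polynomial (ZMod 4))))
      (Polynomial.X ^ 3 - 1) : R) = 0 :=
    Ideal.Quotient.eq_zero_iff_mem.mpr (Ideal.subset_span rfl)
  have h2 : (u ^ 3 - 1 : R) = 0 := by
    simpa [u, map_sub, map_pow] using h
  linear_combination h2

/-- The ring automorphism `σ` of `R` determined by `σ(u) = u²`. -/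
def sigmaR : R →+* R :=
  Ideal.Quotient.lift _ (Polynomial.aeval (u ^ 2)).toRingHom (by
    intro p hp
    obtain ⟨q, rfl⟩ := Ideal.mem_span_singleton.mp hp
    have h6 : ((u ^ 2) ^ 3 : R) = 1 := by
      rw [← pow_mul]
      have : (u : R) ^ (2 * 3) = (u ^ 3) ^ 2 := by ring
      rw [this, u_pow_three, one_pow]
    simp [map_mul, map_sub, map_pow, h6])

/-- The element `δ = 2 + 2u + 2u²` of `R`. -/
def δR : R := 2 + 2 * u + 2 * u ^ 2

/-- The map `ρ : Rⁿ → Rⁿ`, reversing coordinates and applying `σ` coordinatewise. -/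
def ρmap (n : ℕ) (x : Fin n → R) : Fin n → R := fun i => sigmaR (x (Fin.rev i))

/-- The 4-letter DNA alphabet. -/
inductive DNA : Type
  | A | C | G | T
deriving DecidableEq, Inhabited, Repr

/-- Watson–Crick complement of a DNA nucleotide. -/
def DNA.compl : DNA → DNA
  | .A => .T
  | .T => .A
  | .C => .G
  | .G => .C

/-- Complement of a DNA string. -/
def complStr (s : List DNA) : List DNA := s.map DNA.compl

/-- Reverse of a DNA string. -/
def revStr (s : List DNA) : List DNA := s.reverse

/-- Reverse-complement of a DNA string. -/
def rcStr (s : List DNA) : List DNA := s.reverse.map DNA.compl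

/-- Hamming distance between two DNA strings (of equal length). -/
def dH (s t : List DNA) : ℕ := ((s.zip t).filter fun p => p.1 ≠ p.2).length

/-- GC-content of a DNA string: the number of positions carrying `G` or `C`. -/
def gcContent (s : List DNA) : ℕ := (s.filter fun d => d = DNA.G ∨ d = DNA.C).length

/-- A DNA string has no homopolymer run of length greater than `2` iff it has no three
consecutive equal symbols. -/
def NoHomopolymer3 (s : List DNA) : Prop := ¬ ∃ (l r : List DNA) (a : DNA), s = l ++ [a, a, a] ++ r

/-- Blockwise extension of a map `ψ : R → Σ³` to vectors over `R`, by concatenation. -/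
def Ψ (ψ : R → List DNA) {n : ℕ} (x : Fin n → R) : List DNA := (List.ofFn x).flatMap ψ

/-- The map `ψ₂` from the ideal `2R` to DNA strings of length `3`
(the restriction of the DNA map of Table I to `2R`; its value outside `2R` is irrelevant). -/
def ψ₂ (x : R) : List DNA :=
  if x = 0 then [.G, .A, .G]
  else if x = 2 then [.C, .G, .A]
  else if x = 2 * u then [.G, .T, .G]
  else if x = 2 * u ^ 2 then [.A, .G, .C]
  else if x = 2 + 2 * u then [.T, .C, .G]
  else if x = 2 + 2 * u ^ 2 then [.C, .A, .C]
  else if x = 2 * u + 2 * u ^ 2 then [.G, .C, .T]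
  else [.C, .T, .C]

/-- The rows of the Reed–Muller type generator matrix `G_{1,m}` over `R` (with parameter `z`):
`Gmat z m i j` is the entry of `G_{1,m}` in row `i` and column `j`.  Here `G_{1,0} = [z]` and
`G_{1,m+1} = [[G_{1,m}, G_{1,m}], [0 … 0, z … z]]`, which for `m = 1` gives
`G_{1,1} = [[z,z],[0,z]]`. -/
def Gmat (z : R) : (m : ℕ) → Fin (m + 1) → Fin (2 ^ m) → R
  | 0, _, _ => z
  | m + 1, i, j =>
    if hi : (i : ℕ) < m + 1 then
      Gmat z m ⟨i, hi⟩ ⟨(j : ℕ) % 2 ^ m, Nat.mod_lt _ (Nat.two_pow_pos m)⟩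
    else if (j : ℕ) < 2 ^ m then 0 else z

/-- The Reed–Muller type code `R(1,m)`: the `R`-submodule of `R^{2^m}` generated by the rows
of `G_{1,m}`. -/
def RM (z : R) (m : ℕ) : Submodule R (Fin (2 ^ m) → R) := Submodule.span R (Set.range (Gmat z m))

/-- Hamming weight of a vector over `R`. -/
def wt {N : ℕ} (c : Fin N → R) : ℕ := (Finset.univ.filter fun j => c j ≠ 0).card

/-- Hamming distance between two vectors over `R`. -/
def hdistR {N : ℕ} (c c' : Fin N → R) : ℕ := (Finset.univ.filter fun j => c j ≠ c' j).card

/-- Coordinate reversal of a vector over `R`. -/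
def revVec {N : ℕ} (c : Fin N → R) : Fin N → R := fun j => c (Fin.rev j)

/-- `a + bu + cu²` as an element of `R`, for `a, b, c ∈ ℤ₄`. -/
def toR (a b c : ZMod 4) : R :=
  algebraMap (ZMod 4) R a + algebraMap (ZMod 4) R b * u + algebraMap (ZMod 4) R c * u ^ 2

end

/-!
Write `x ∈ R` as `a + bu + cu²`. Then `u²σ(a + bu + cu²) = c + bu + au²`, `x + δ` adds `2` to
every coordinate, and on `2R` the table `ψ₂` turns the first operation into reversal of the codon
and the second into complementation (a finite check). Hence the reverse of `ψ₂(x)` is `ψ₂(u²ρ(x))`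
and its reverse-complement is `ψ₂(u²ρ(x) + (δ, …, δ))`, both images of codewords of `C`. Every
codon of `ψ₂` contains two letters from `{G, C}` and its middle letter differs from both
neighbours, which gives the GC-content and excludes runs of length `3`.
-/

lemma algebraMap_eq_mk_C (a : ZMod 4) :
    algebraMap (ZMod 4) R a = Ideal.Quotient.mk _ (C a) := by
  rw [← Polynomial.algebraMap_eq, Ideal.Quotient.mk_algebraMap]

lemma map_algebraMap_zmod {n : ℕ} {S T : Type*} [Semiring S] [Semiring T] [Algebra (ZMod n) S]
    [Algebra (ZMod n) T] (f : S →+* T) (k : ZMod n) :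
    f (algebraMap (ZMod n) S k) = algebraMap (ZMod n) T k :=
  RingHom.congr_fun (RingHom.ext_zmod (f.comp (algebraMap (ZMod n) S)) (algebraMap _ _)) k

lemma toR_add (a b c a' b' c' : ZMod 4) :
    toR a b c + toR a' b' c' = toR (a + a') (b + b') (c + c') := by
  simp only [toR, map_add]; ring

lemma u_mul_toR (a b c : ZMod 4) : u * toR a b c = toR c a b := by
  simp only [toR]
  linear_combination algebraMap (ZMod 4) R c * u_pow_three

lemma u_sq_mul_toR (a b c : ZMod 4) : u ^ 2 * toR a b c = toR b c a := by
  rw [sq, mul_assoc, u_mul_toR, u_mul_toR]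

lemma two_mul_toR (a b c : ZMod 4) : 2 * toR a b c = toR (2 * a) (2 * b) (2 * c) := by
  simp only [toR, map_mul, map_ofNat]; ring

lemma exists_toR (x : R) : ∃ a b c : ZMod 4, x = toR a b c := by
  obtain ⟨p, rfl⟩ := Ideal.Quotient.mk_surjective x
  induction p using Polynomial.induction_on with
  | C a => exact ⟨a, 0, 0, by simp [toR, algebraMap_eq_mk_C]⟩
  | add p q hp hq =>
    obtain ⟨a, b, c, hp⟩ := hp
    obtain ⟨a', b', c', hq⟩ := hq
    exact ⟨a + a', b + b', c + c', by rw [map_add, hp, hq, toR_add]⟩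
  | monomial k a h =>
    obtain ⟨a, b, c, h⟩ := h
    refine ⟨c, a, b, ?_⟩
    rw [← u_mul_toR, ← h, u, ← map_mul]
    congr 1
    ring

lemma exists_toR_of_mem_span_two {x : R} (hx : x ∈ Ideal.span {(2 : R)}) :
    ∃ a b c : ZMod 4, x = toR (2 * a) (2 * b) (2 * c) := by
  obtain ⟨y, rfl⟩ := Ideal.mem_span_singleton.mp hx
  obtain ⟨a, b, c, rfl⟩ := exists_toR y
  exact ⟨a, b, c, two_mul_toR a b c⟩

def cyclicShift : Matrix (Fin 3) (Fin 3) (ZMod 4) := !![0, 1, 0; 0, 0, 1; 1, 0, 0]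

/-- Multiplication by `u` permutes the coordinates cyclically, so `R` embeds into the circulant
`3 × 3` matrices over `ℤ₄`; the first row of the image of `a + bu + cu²` is `(a, b, c)`. -/
noncomputable def regularRep : R →+* Matrix (Fin 3) (Fin 3) (ZMod 4) :=
  Ideal.Quotient.lift _ (aeval cyclicShift).toRingHom (by
    intro p hp
    obtain ⟨q, rfl⟩ := Ideal.mem_span_singleton.mp hp
    have h : cyclicShift ^ 3 = 1 := by decide
    simp [h])

lemma regularRep_toR (a b c : ZMod 4) :
    regularRep (toR a b c) = !![a, b, c; c, a, b; b, c, a] := by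
  have hu : regularRep u = cyclicShift := by simp [regularRep, u]
  simp only [toR, map_add, map_mul, map_pow, hu, map_algebraMap_zmod]
  simp only [Algebra.algebraMap_eq_smul_one]
  ext i j
  fin_cases i <;> fin_cases j <;> simp [cyclicShift, sq]

lemma toR_inj {a b c a' b' c' : ZMod 4} :
    toR a b c = toR a' b' c' ↔ a = a' ∧ b = b' ∧ c = c' := by
  refine ⟨fun h => ?_, by rintro ⟨rfl, rfl, rfl⟩; rfl⟩
  have h := congrArg regularRep h
  rw [regularRep_toR, regularRep_toR] at h
  exact ⟨by simpa using congrFun₂ h 0 0, by simpa using congrFun₂ h 0 1,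
    by simpa using congrFun₂ h 0 2⟩

lemma sigmaR_toR (a b c : ZMod 4) : sigmaR (toR a b c) = toR a c b := by
  have hu : sigmaR u = u ^ 2 := by simp [sigmaR, u]
  simp only [toR, map_add, map_mul, map_pow, hu, map_algebraMap_zmod]
  linear_combination algebraMap (ZMod 4) R c * u * u_pow_three

lemma δR_eq_toR : δR = toR 2 2 2 := by
  simp [δR, toR, map_ofNat]

def ψ₂Coeff (a b c : ZMod 4) : List DNA :=
  if a = 0 ∧ b = 0 ∧ c = 0 then [.G, .A, .G]
  else if a = 2 ∧ b = 0 ∧ c = 0 then [.C, .G, .A]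
  else if a = 0 ∧ b = 2 ∧ c = 0 then [.G, .T, .G]
  else if a = 0 ∧ b = 0 ∧ c = 2 then [.A, .G, .C]
  else if a = 2 ∧ b = 2 ∧ c = 0 then [.T, .C, .G]
  else if a = 2 ∧ b = 0 ∧ c = 2 then [.C, .A, .C]
  else if a = 0 ∧ b = 2 ∧ c = 2 then [.G, .C, .T]
  else [.C, .T, .C]

lemma ψ₂_toR (a b c : ZMod 4) : ψ₂ (toR a b c) = ψ₂Coeff a b c := by
  -- compound constants first, so that `2` is not rewritten inside them
  rw [ψ₂, ψ₂Coeff, show (2 : R) + 2 * u = toR 2 2 0 by simp [toR, map_ofNat],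
    show (2 : R) + 2 * u ^ 2 = toR 2 0 2 by simp [toR, map_ofNat],
    show (2 : R) * u + 2 * u ^ 2 = toR 0 2 2 by simp [toR, map_ofNat],
    show (2 : R) * u = toR 0 2 0 by simp [toR, map_ofNat],
    show (2 : R) * u ^ 2 = toR 0 0 2 by simp [toR, map_ofNat],
    show (2 : R) = toR 2 0 0 by simp [toR, map_ofNat],
    show (0 : R) = toR 0 0 0 by simp [toR]]
  simp only [toR_inj]

lemma ψ₂Coeff_reverse (a b c : ZMod 4) :
    (ψ₂Coeff (2 * a) (2 * b) (2 * c)).reverse = ψ₂Coeff (2 * c) (2 * b) (2 * a) := by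
  revert a b c; decide

lemma ψ₂Coeff_map_compl (a b c : ZMod 4) :
    (ψ₂Coeff (2 * a) (2 * b) (2 * c)).map DNA.compl =
      ψ₂Coeff (2 * a + 2) (2 * b + 2) (2 * c + 2) := by
  revert a b c; decide

lemma ψ₂_reverse {x : R} (hx : x ∈ Ideal.span {(2 : R)}) :
    (ψ₂ x).reverse = ψ₂ (u ^ 2 * sigmaR x) := by
  obtain ⟨a, b, c, rfl⟩ := exists_toR_of_mem_span_two hx
  rw [sigmaR_toR, u_sq_mul_toR, ψ₂_toR, ψ₂_toR, ψ₂Coeff_reverse]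

lemma ψ₂_map_compl {x : R} (hx : x ∈ Ideal.span {(2 : R)}) :
    (ψ₂ x).map DNA.compl = ψ₂ (x + δR) := by
  obtain ⟨a, b, c, rfl⟩ := exists_toR_of_mem_span_two hx
  rw [δR_eq_toR, toR_add, ψ₂_toR, ψ₂_toR, ψ₂Coeff_map_compl]

lemma gcContent_ψ₂ (x : R) : gcContent (ψ₂ x) = 2 := by
  unfold ψ₂; split_ifs <;> rfl

lemma ψ₂_eq_codon (x : R) : ∃ d₁ d₂ d₃ : DNA, ψ₂ x = [d₁, d₂, d₃] ∧ d₁ ≠ d₂ ∧ d₂ ≠ d₃ := by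
  unfold ψ₂; split_ifs <;> exact ⟨_, _, _, rfl, by decide, by decide⟩

lemma List.reverse_ofFn {α : Type*} {m : ℕ} (f : Fin m → α) :
    (List.ofFn f).reverse = List.ofFn fun i => f i.rev := by
  refine List.ext_getElem (by simp) fun i h₁ h₂ => ?_
  simp only [List.getElem_reverse, List.getElem_ofFn, Fin.rev]
  congr 2
  simp only [List.length_ofFn] at h₁ ⊢
  omega

lemma no_triple_cons_cons_cons {α : Type*} {a b c : α} {t : List α} (hab : a ≠ b) (hbc : b ≠ c)
    (ht : ¬ ∃ (l r : List α) (x : α), t = l ++ [x, x, x] ++ r)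
    (ht₂ : ∀ x y t', t = x :: y :: t' → x ≠ y) :
    ¬ ∃ (l r : List α) (x : α), a :: b :: c :: t = l ++ [x, x, x] ++ r := by
  rintro ⟨l, r, x, h⟩
  match l, h with
  | [], h =>
    simp only [List.nil_append, List.cons_append, List.cons.injEq] at h
    exact hab (h.1.trans h.2.1.symm)
  | [_], h =>
    simp only [List.cons_append, List.nil_append, List.cons.injEq] at h
    exact hbc (h.2.1.trans h.2.2.1.symm)
  | [_, _], h =>
    simp only [List.cons_append, List.nil_append, List.cons.injEq] at h
    exact ht₂ x x _ h.2.2.2 rfl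
  | _ :: _ :: _ :: l, h =>
    simp only [List.cons_append, List.cons.injEq] at h
    exact ht ⟨l, r, x, by simpa using h.2.2.2⟩

/-- The second conjunct is the invariant that makes the induction go through. -/
lemma no_triple_flatten {α : Type*} (L : List (List α))
    (hL : ∀ s ∈ L, ∃ a b c : α, s = [a, b, c] ∧ a ≠ b ∧ b ≠ c) :
    (¬ ∃ (l r : List α) (x : α), L.flatten = l ++ [x, x, x] ++ r) ∧
      ∀ x y t, L.flatten = x :: y :: t → x ≠ y := by
  induction L with
  | nil => simp
  | cons s L ih =>
    obtain ⟨a, b, c, rfl, hab, hbc⟩ := hL s List.mem_cons_self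
    obtain ⟨ht, ht₂⟩ := ih fun t ht => hL t (List.mem_cons_of_mem _ ht)
    refine ⟨no_triple_cons_cons_cons hab hbc ht ht₂, ?_⟩
    rintro x y t ⟨rfl, rfl, -⟩
    exact hab

lemma Ψ_eq_flatten (ψ : R → List DNA) {n : ℕ} (x : Fin n → R) :
    Ψ ψ x = (List.ofFn fun i => ψ (x i)).flatten := by
  rw [Ψ, List.flatMap_def, List.map_ofFn]
  rfl

lemma gcContent_flatten (L : List (List DNA)) : gcContent L.flatten = (L.map gcContent).sum := by
  simp only [gcContent, List.filter_flatten, List.length_flatten, List.map_map]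
  rfl

lemma gcContent_Ψ (ψ : R → List DNA) {k : ℕ} (hψ : ∀ r, gcContent (ψ r) = k) {n : ℕ}
    (x : Fin n → R) : gcContent (Ψ ψ x) = k * n := by
  simp [Ψ_eq_flatten, gcContent_flatten, List.map_ofFn, Function.comp_def, hψ, mul_comm]

lemma noHomopolymer3_Ψ (ψ : R → List DNA)
    (hψ : ∀ r, ∃ d₁ d₂ d₃ : DNA, ψ r = [d₁, d₂, d₃] ∧ d₁ ≠ d₂ ∧ d₂ ≠ d₃) {n : ℕ} (x : Fin n → R) :
    NoHomopolymer3 (Ψ ψ x) := by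
  rw [Ψ_eq_flatten]
  refine (no_triple_flatten _ fun s hs => ?_).1
  obtain ⟨i, rfl⟩ := List.mem_ofFn.mp hs
  exact hψ (x i)

section Code

variable {n : ℕ} {x : Fin n → R}

lemma revStr_Ψ_ψ₂ (hx : ∀ i, x i ∈ Ideal.span {(2 : R)}) :
    revStr (Ψ ψ₂ x) = Ψ ψ₂ (u ^ 2 • ρmap n x) := by
  simp only [revStr, Ψ_eq_flatten, List.reverse_flatten, List.map_ofFn, List.reverse_ofFn]
  congr 2
  funext i
  exact ψ₂_reverse (hx i.rev)

lemma complStr_Ψ_ψ₂ (hx : ∀ i, x i ∈ Ideal.span {(2 : R)}) :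
    complStr (Ψ ψ₂ x) = Ψ ψ₂ (x + fun _ => δR) := by
  simp only [complStr, Ψ_eq_flatten, List.map_flatten, List.map_ofFn]
  congr 2
  funext i
  exact ψ₂_map_compl (hx i)

end Code

/-- If `C ⊆ (2R)ⁿ` is an `R`-submodule of `Rⁿ` with `(δ, …, δ) ∈ C` and `ρ(C) ⊆ C`, then the
DNA code `D = ψ₂(C)` is closed under reverse and reverse-complement, every codeword has
GC-content exactly `2n`, and no codeword contains a homopolymer run of length greater
than 2. -/
theorem stmt11 (n : ℕ) (C : Submodule R (Fin n → R))
    (hsub : ∀ x ∈ C, ∀ i : Fin n, x i ∈ Ideal.span {(2 : R)})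
    (hδ : (fun _ : Fin n => δR) ∈ C)
    (hρ : ∀ y ∈ C, ρmap n y ∈ C)
    (D : Set (List DNA)) (hD : D = (fun x : Fin n → R => Ψ ψ₂ x) '' (C : Set (Fin n → R))) :
    (∀ s ∈ D, revStr s ∈ D) ∧
    (∀ s ∈ D, rcStr s ∈ D) ∧
    (∀ s ∈ D, gcContent s = 2 * n) ∧
    (∀ s ∈ D, NoHomopolymer3 s) := by
  subst hD
  have hrev : ∀ x ∈ C, u ^ 2 • ρmap n x ∈ C := fun x hx => C.smul_mem _ (hρ x hx)
  refine ⟨?_, ?_, ?_, ?_⟩ <;> rintro _ ⟨x, hx, rfl⟩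
  · exact ⟨_, hrev x hx, (revStr_Ψ_ψ₂ (hsub x hx)).symm⟩
  · refine ⟨_, C.add_mem (hrev x hx) hδ, ?_⟩
    change _ = complStr (revStr _)
    rw [revStr_Ψ_ψ₂ (hsub x hx), complStr_Ψ_ψ₂ (hsub _ (hrev x hx))]
  · exact gcContent_Ψ ψ₂ gcContent_ψ₂ x
  · exact noHomopolymer3_Ψ ψ₂ ψ₂_eq_codon x
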